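/- Auxiliary systems do not increase the pre-processed improvements: if Λ_{φ̃(AZ)} := Λ_φ^A ⊗ id^Z, then M_{λ,φ̃(AZ)}(Θ) = M_{λ,φ}(Θ) for all channels Θ, all λ ∈ [0,1], all phase vectors φ, and all auxiliary systems Z. -/

import Mathlib

open Matrix Complex
open scoped ComplexOrder

/-- A superoperator: a ℂ-linear map from operators on `ι` to operators on `κ`. -/
abbrev SO (ι κ : Type*) [Fintype ι] [DecidableEq ι] [Fintype κ] [DecidableEq κ] :=
  Matrix ι ι ℂ →ₗ[ℂ] Matrix κ κ ℂ

/-- Choi matrix of a superoperator. -/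
noncomputable def choi {ι κ : Type*} [Fintype ι] [DecidableEq ι] [Fintype κ] [DecidableEq κ]
    (Θ : SO ι κ) : Matrix (κ × ι) (κ × ι) ℂ :=
  Matrix.of fun p q => Θ (Matrix.single p.2 q.2 1) p.1 q.1

/-- A quantum state: positive semidefinite with unit trace. -/
def IsState {ι : Type*} [Fintype ι] (ρ : Matrix ι ι ℂ) : Prop := ρ.PosSemidef ∧ ρ.trace = 1

/-- A quantum channel: completely positive (PSD Choi matrix) and trace preserving. -/
def IsChannel {ι κ : Type*} [Fintype ι] [DecidableEq ι] [Fintype κ] [DecidableEq κ]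
    (Θ : SO ι κ) : Prop :=
  (choi Θ).PosSemidef ∧ ∀ ρ, (Θ ρ).trace = ρ.trace

/-- Total dephasing channel in the fixed incoherent basis. -/
noncomputable def deph {ι : Type*} [Fintype ι] [DecidableEq ι] : SO ι ι where
  toFun ρ := Matrix.of fun i j => if i = j then ρ i j else 0
  map_add' := by
    intro x y; ext i j
    by_cases h : i = j <;> simp [h]
  map_smul' := by
    intro c x; ext i j
    by_cases h : i = j <;> simp [h]

/-- Phase-encoding unitary channel `Λ_φ`. -/
noncomputable def phaseCh {ι : Type*} [Fintype ι] [DecidableEq ι] (φ : ι → ℝ) : SO ι ι where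
  toFun ρ := Matrix.of fun i j => Complex.exp (Complex.I * ((φ i : ℂ) - (φ j : ℂ))) * ρ i j
  map_add' := by
    intro x y; ext i j; simp [mul_add]
  map_smul' := by
    intro c x; ext i j; simp; ring

/-- The superoperator `λ·id − (1−λ)·Λ_φ`. -/
noncomputable def diffOp {ι : Type*} [Fintype ι] [DecidableEq ι] (lam : ℝ) (φ : ι → ℝ) :
    SO ι ι :=
  (lam : ℂ) • LinearMap.id - ((1 - lam : ℝ) : ℂ) • phaseCh φ

/-- Trace norm of a matrix: sum of singular values. -/
noncomputable def traceNorm {ι : Type*} [Fintype ι] [DecidableEq ι]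
    (M : Matrix ι ι ℂ) : ℝ :=
  ∑ i, Real.sqrt ((Matrix.isHermitian_conjTranspose_mul_self M).eigenvalues i)

/-- `Θ ⊗ id` acting on a composite system. -/
noncomputable def tensorId {ι κ ν : Type*} [Fintype ι] [DecidableEq ι] [Fintype κ]
    [DecidableEq κ] [Fintype ν] [DecidableEq ν] (Θ : SO ι κ) : SO (ι × ν) (κ × ν) where
  toFun ρ := Matrix.of fun p q =>
    ∑ i, ∑ j, Θ (Matrix.single i j 1) p.1 q.1 * ρ (i, p.2) (j, q.2)
  map_add' := by
    intro x y; ext p q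
    simp [Matrix.add_apply, mul_add, Finset.sum_add_distrib]
  map_smul' := by
    intro c x; ext p q
    simp only [Matrix.of_apply, Matrix.smul_apply, smul_eq_mul, RingHom.id_apply,
      Finset.mul_sum]
    exact Finset.sum_congr rfl fun i _ => Finset.sum_congr rfl fun j _ => by ring

/-- Detection incoherent channels: `Δ Φ = Δ Φ Δ`. -/
def IsDI {ι κ : Type*} [Fintype ι] [DecidableEq ι] [Fintype κ] [DecidableEq κ]
    (Φ : SO ι κ) : Prop :=
  deph ∘ₗ Φ = deph ∘ₗ Φ ∘ₗ deph

/-- Maximally incoherent channels: `Ψ Δ = Δ Ψ Δ`. -/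
def IsMIO {ι κ : Type*} [Fintype ι] [DecidableEq ι] [Fintype κ] [DecidableEq κ]
    (Ψ : SO ι κ) : Prop :=
  Ψ ∘ₗ deph = deph ∘ₗ Ψ ∘ₗ deph

/-- The pre-processed improvement `M_{λ,φ}(Θ)`. -/
noncomputable def Mpre {α β γ : Type*} [Fintype α] [DecidableEq α] [Fintype β] [DecidableEq β]
    [Fintype γ] [DecidableEq γ] (lam : ℝ) (φ : α → ℝ) (Θ : SO β γ) : ℝ :=
  sSup {x : ℝ | ∃ (Φ : SO α β) (ρ : Matrix α α ℂ), IsChannel Φ ∧ IsDI Φ ∧ IsState ρ ∧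
    x = traceNorm (deph (Θ (Φ (diffOp lam φ ρ))))} - |lam - (1 - lam)|

/-- The post-processed improvement `N_{λ,φ}(Θ)`. -/
noncomputable def Npost {α β γ : Type*} [Fintype α] [DecidableEq α] [Fintype β] [DecidableEq β]
    [Fintype γ] [DecidableEq γ] (lam : ℝ) (φ : γ → ℝ) (Θ : SO α β) : ℝ :=
  sSup {x : ℝ | ∃ (Ψ : SO β γ) (ρ : Matrix α α ℂ), IsChannel Ψ ∧ IsMIO Ψ ∧ IsState ρ ∧
    x = traceNorm (diffOp lam φ (Ψ (Θ (deph ρ))))} - |lam - (1 - lam)|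

/-!
Every value in either supremum is dominated by a value in the other. A strategy `(Φ, ρ)` on `α` becomes
one on `α × ζ` by preparing `ρ ⊗ |z₀⟩⟨z₀|` and letting `Φ` act after the partial trace, a
detection-incoherent channel. Conversely, a state of `α × ζ` is a mixture of pure states `ψ`, and
each `ψ` equals `V c` for a unit vector `c` on `α` and the isometry `V : |a⟩ ↦ |a⟩ ⊗ |u a⟩`; the
channel `σ ↦ V σ Vᴴ` is detection-incoherent and intertwines `Λ_φ` with `Λ_φ ⊗ id`, so the pure
components are realised on `α`. Since `‖Δ X‖₁` is the `ℓ¹` norm of the diagonal of `X`, the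
objective is convex and one pure component does at least as well as the mixture.
-/

open Finset
open scoped Kronecker

section TraceNorm

variable {n : Type*} [Fintype n] [DecidableEq n]

theorem traceNorm_diagonal (d : n → ℂ) : traceNorm (diagonal d) = ∑ i, ‖d i‖ := by
  set hH := isHermitian_conjTranspose_mul_self (diagonal d)
  have hgram : (diagonal d)ᴴ * diagonal d = diagonal fun i => ((‖d i‖ ^ 2 : ℝ) : ℂ) := by
    rw [diagonal_conjTranspose, diagonal_mul_diagonal]
    congr 1; funext i
    simp [Complex.conj_mul']
  -- the eigenvalues of a diagonal matrix are its diagonal entries: both are the roots of the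
  -- characteristic polynomial
  have hroots := hH.roots_charpoly_eq_eigenvalues
  rw [congrArg charpoly hgram, charpoly_diagonal,
    Polynomial.roots_prod _ _ (prod_ne_zero_iff.mpr fun i _ => Polynomial.X_sub_C_ne_zero _)]
    at hroots
  simp only [Polynomial.roots_X_sub_C, Multiset.bind_singleton] at hroots
  have heig : univ.val.map hH.eigenvalues = univ.val.map fun i => ‖d i‖ ^ 2 := by
    apply Multiset.map_injective Complex.ofReal_injective
    simpa [Multiset.map_map, Function.comp_def] using hroots.symm
  calc traceNorm (diagonal d) = ((univ.val.map hH.eigenvalues).map Real.sqrt).sum := by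
        rw [Multiset.map_map]; rfl
    _ = ∑ i, ‖d i‖ := by
        rw [heig, Multiset.map_map]
        exact sum_congr rfl fun i _ => Real.sqrt_sq (norm_nonneg _)

theorem traceNorm_deph (M : Matrix n n ℂ) : traceNorm (deph M) = ∑ i, ‖M i i‖ := by
  rw [← traceNorm_diagonal]
  congr 1
  ext i j
  by_cases h : i = j <;> simp [deph, h]

theorem traceNorm_deph_sum_smul_le {κ : Type*} [Fintype κ] (e : κ → ℝ) (he : ∀ k, 0 ≤ e k)
    (M : κ → Matrix n n ℂ) :
    traceNorm (deph (∑ k, (e k : ℂ) • M k)) ≤ ∑ k, e k * traceNorm (deph (M k)) := by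
  simp only [traceNorm_deph, mul_sum]
  rw [sum_comm]
  refine sum_le_sum fun i _ => ?_
  rw [Matrix.sum_apply]
  refine (norm_sum_le _ _).trans_eq (sum_congr rfl fun k _ => ?_)
  simp [abs_of_nonneg (he k)]

end TraceNorm

section Channel

variable {ι κ τ : Type*} [Fintype ι] [DecidableEq ι] [Fintype κ] [DecidableEq κ]
  [Fintype τ] [DecidableEq τ]

theorem apply_eq_sum_choi (Θ : SO ι κ) (X : Matrix ι ι ℂ) (p q : κ) :
    Θ X p q = ∑ i, ∑ j, choi Θ (p, i) (q, j) * X i j := by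
  conv_lhs => rw [matrix_eq_sum_single X]
  simp only [map_sum, Matrix.sum_apply]
  refine sum_congr rfl fun i _ => sum_congr rfl fun j _ => ?_
  rw [← mul_one (X i j), ← smul_eq_mul, ← smul_single, map_smul]
  simp [choi, mul_comm]

theorem IsChannel.comp {Θ : SO κ τ} {Φ : SO ι κ} (hΘ : IsChannel Θ) (hΦ : IsChannel Φ) :
    IsChannel (Θ ∘ₗ Φ) := by
  refine ⟨?_, fun ρ => by rw [LinearMap.comp_apply, hΘ.2, hΦ.2]⟩
  -- the Choi matrix of `Θ ∘ Φ` is a compression of `choi Θ ⊗ choi Φ`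
  let W : Matrix ((τ × κ) × (κ × ι)) (τ × ι) ℂ :=
    of fun x y => if x.1.1 = y.1 ∧ x.1.2 = x.2.1 ∧ x.2.2 = y.2 then 1 else 0
  have hW : choi (Θ ∘ₗ Φ) = Wᴴ * (choi Θ ⊗ₖ choi Φ) * W := by
    ext ⟨p, i⟩ ⟨q, j⟩
    rw [show choi (Θ ∘ₗ Φ) (p, i) (q, j) = Θ (Φ (single i j 1)) p q from rfl,
      apply_eq_sum_choi Θ]
    simp [W, mul_apply, Fintype.sum_prod_type, ite_and, apply_ite (starRingEnd ℂ)]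
    exact sum_comm.trans rfl
  exact hW ▸ (hΘ.1.kronecker hΦ.1).conjTranspose_mul_mul_same W

theorem IsDI.comp {Θ : SO κ τ} {Φ : SO ι κ} (hΘ : IsDI Θ) (hΦ : IsDI Φ) : IsDI (Θ ∘ₗ Φ) := by
  ext1 σ
  have hΘ' := LinearMap.congr_fun hΘ
  have hΦ' := LinearMap.congr_fun hΦ
  simp only [LinearMap.comp_apply] at hΘ' hΦ' ⊢
  rw [hΘ', hΦ', ← hΘ']

end Channel

section Kraus

variable {ι κ : Type*} [Fintype ι] [DecidableEq ι] [Fintype κ] [DecidableEq κ]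

noncomputable def conjCh (K : Matrix κ ι ℂ) : SO ι κ where
  toFun σ := K * σ * Kᴴ
  map_add' _ _ := by rw [Matrix.mul_add, Matrix.add_mul]
  map_smul' _ _ := by rw [Matrix.mul_smul, Matrix.smul_mul]; rfl

@[simp] theorem conjCh_apply (K : Matrix κ ι ℂ) (σ : Matrix ι ι ℂ) : conjCh K σ = K * σ * Kᴴ :=
  rfl

theorem choi_conjCh (K : Matrix κ ι ℂ) :
    choi (conjCh K) = vecMulVec (fun x => K x.1 x.2) (star fun x => K x.1 x.2) := by
  ext ⟨p, i⟩ ⟨q, j⟩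
  simp [choi, vecMulVec_apply, mul_apply, single_apply, ite_and]

theorem choi_sum {ν : Type*} [Fintype ν] (Θ : ν → SO ι κ) : choi (∑ n, Θ n) = ∑ n, choi (Θ n) := by
  ext p q
  simp [choi, Matrix.sum_apply]

theorem isChannel_sum_conjCh {ν : Type*} [Fintype ν] (K : ν → Matrix κ ι ℂ)
    (hK : ∑ n, (K n)ᴴ * K n = 1) : IsChannel (∑ n, conjCh (K n)) := by
  refine ⟨?_, fun σ => ?_⟩
  · rw [choi_sum]
    exact posSemidef_sum _ fun n _ => by rw [choi_conjCh]; exact posSemidef_vecMulVec_self_star _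
  · simp_rw [LinearMap.sum_apply, conjCh_apply, trace_sum, trace_mul_cycle (K _), ← trace_sum,
      ← Finset.sum_mul, hK, one_mul]

theorem isChannel_conjCh (K : Matrix κ ι ℂ) (hK : Kᴴ * K = 1) : IsChannel (conjCh K) := by
  simpa using isChannel_sum_conjCh (fun _ : Unit => K) (by simpa using hK)

end Kraus

section Phase

variable {ι κ : Type*} [Fintype ι] [DecidableEq ι] [Fintype κ] [DecidableEq κ]

theorem phaseCh_apply (φ : ι → ℝ) (σ : Matrix ι ι ℂ) (i j : ι) :
    phaseCh φ σ i j = Complex.exp (Complex.I * ((φ i : ℂ) - (φ j : ℂ))) * σ i j :=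
  rfl

theorem diffOp_comm {φ : ι → ℝ} {φ' : κ → ℝ} {E : SO ι κ}
    (h : ∀ σ, E (phaseCh φ σ) = phaseCh φ' (E σ)) (lam : ℝ) (σ : Matrix ι ι ℂ) :
    E (diffOp lam φ σ) = diffOp lam φ' (E σ) := by
  simp [diffOp, h]

end Phase

section PartialTrace

variable {α ζ : Type*} [Fintype α] [DecidableEq α] [Fintype ζ] [DecidableEq ζ]

noncomputable def ptr : SO (α × ζ) α where
  toFun σ := of fun a b => ∑ z, σ (a, z) (b, z)
  map_add' _ _ := by ext; simp [sum_add_distrib]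
  map_smul' _ _ := by ext; simp [mul_sum]

@[simp] theorem ptr_apply (σ : Matrix (α × ζ) (α × ζ) ℂ) (a b : α) :
    ptr σ a b = ∑ z, σ (a, z) (b, z) :=
  rfl

theorem ptr_eq_sum_conjCh :
    (ptr : SO (α × ζ) α) = ∑ z, conjCh (of fun a x => if x = (a, z) then 1 else 0) := by
  ext σ a b
  simp [LinearMap.sum_apply, Matrix.sum_apply, mul_apply]

theorem isChannel_ptr : IsChannel (ptr : SO (α × ζ) α) := by
  rw [ptr_eq_sum_conjCh]
  refine isChannel_sum_conjCh _ ?_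
  ext x y
  simp only [Matrix.sum_apply, mul_apply, conjTranspose_apply, of_apply]
  rw [← Fintype.sum_prod_type_right
    (f := fun p => star (if x = p then (1 : ℂ) else 0) * if y = p then 1 else 0)]
  simp [one_apply]

theorem isDI_ptr : IsDI (ptr : SO (α × ζ) α) := by
  ext σ a b : 2
  by_cases h : a = b <;> simp [deph, h]

theorem ptr_kronecker (A : Matrix α α ℂ) (B : Matrix ζ ζ ℂ) : ptr (A ⊗ₖ B) = B.trace • A := by
  ext a b
  simp [kroneckerMap_apply, trace, mul_sum, mul_comm]

theorem diffOp_kronecker (lam : ℝ) (φ : α → ℝ) (A : Matrix α α ℂ) (B : Matrix ζ ζ ℂ) :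
    diffOp lam (fun p : α × ζ => φ p.1) (A ⊗ₖ B) = diffOp lam φ A ⊗ₖ B := by
  ext p q
  simp [diffOp, phaseCh, kroneckerMap_apply]
  ring

omit [DecidableEq α] [DecidableEq ζ] in
theorem IsState.kronecker {A : Matrix α α ℂ} {B : Matrix ζ ζ ℂ} (hA : IsState A)
    (hB : IsState B) : IsState (A ⊗ₖ B) :=
  ⟨hA.1.kronecker hB.1, by rw [trace_kronecker, hA.2, hB.2, one_mul]⟩

end PartialTrace

section Ancilla

variable {α ζ : Type*} [Fintype α] [DecidableEq α] [Fintype ζ] [DecidableEq ζ]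

/-- The isometry `|a⟩ ↦ |a⟩ ⊗ |u a⟩`. -/
def ancillaIsometry (u : α → EuclideanSpace ℂ ζ) : Matrix (α × ζ) α ℂ :=
  of fun p a => if p.1 = a then u a p.2 else 0

theorem conjCh_ancillaIsometry_apply (u : α → EuclideanSpace ℂ ζ) (σ : Matrix α α ℂ)
    (p q : α × ζ) :
    conjCh (ancillaIsometry u) σ p q = u p.1 p.2 * σ p.1 q.1 * star (u q.1 q.2) := by
  simp [ancillaIsometry, mul_apply, apply_ite (starRingEnd ℂ)]

omit [DecidableEq ζ] in
theorem ancillaIsometry_conjTranspose_mul_self {u : α → EuclideanSpace ℂ ζ} (hu : ∀ a, ‖u a‖ = 1) :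
    (ancillaIsometry u)ᴴ * ancillaIsometry u = 1 := by
  ext a b
  by_cases h : a = b
  · subst h
    have hnorm := inner_self_eq_norm_sq_to_K (𝕜 := ℂ) (u a)
    rw [hu a, EuclideanSpace.inner_eq_star_dotProduct, dotProduct] at hnorm
    simpa [ancillaIsometry, mul_apply, Fintype.sum_prod_type, mul_comm] using hnorm
  · simp [ancillaIsometry, mul_apply, Fintype.sum_prod_type, h, Ne.symm h]

theorem isDI_conjCh_ancillaIsometry (u : α → EuclideanSpace ℂ ζ) :
    IsDI (conjCh (ancillaIsometry u)) := by
  ext σ p q : 2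
  by_cases h : p = q <;> simp [conjCh_ancillaIsometry_apply, deph, h]

theorem conjCh_ancillaIsometry_phaseCh (u : α → EuclideanSpace ℂ ζ) (φ : α → ℝ)
    (σ : Matrix α α ℂ) :
    conjCh (ancillaIsometry u) (phaseCh φ σ)
      = phaseCh (fun p : α × ζ => φ p.1) (conjCh (ancillaIsometry u) σ) := by
  ext p q
  rw [conjCh_ancillaIsometry_apply, phaseCh_apply, phaseCh_apply, conjCh_ancillaIsometry_apply]
  ring

end Ancilla

section Pure

theorem isState_vecMulVec {n : Type*} [Fintype n] {ψ : EuclideanSpace ℂ n} (hψ : ‖ψ‖ = 1) :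
    IsState (vecMulVec ψ (star ψ)) := by
  refine ⟨posSemidef_vecMulVec_self_star _, ?_⟩
  have hnorm := inner_self_eq_norm_sq_to_K (𝕜 := ℂ) ψ
  rw [hψ, EuclideanSpace.inner_eq_star_dotProduct] at hnorm
  simpa [trace_vecMulVec] using hnorm

theorem IsState.exists_pure_decomposition {n : Type*} [Fintype n] [DecidableEq n]
    {ρ : Matrix n n ℂ} (h : IsState ρ) :
    ∃ (e : n → ℝ) (ψ : n → EuclideanSpace ℂ n), (∀ k, 0 ≤ e k) ∧ ∑ k, e k = 1 ∧
      (∀ k, ‖ψ k‖ = 1) ∧ ρ = ∑ k, (e k : ℂ) • vecMulVec (ψ k) (star (ψ k)) := by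
  have hH := h.1.isHermitian
  refine ⟨hH.eigenvalues, hH.eigenvectorBasis, h.1.eigenvalues_nonneg, ?_,
    hH.eigenvectorBasis.orthonormal.1, ?_⟩
  · have htr := hH.trace_eq_sum_eigenvalues
    rw [h.2] at htr
    simpa using congrArg RCLike.re htr.symm
  · conv_lhs => rw [hH.spectral_theorem]
    ext p q
    rw [Unitary.conjStarAlgAut_apply, mul_apply]
    simp [vecMulVec_apply, Matrix.sum_apply, mul_diagonal]
    exact sum_congr rfl fun k _ => by ring

variable {α ζ : Type*} [Fintype α] [DecidableEq α] [Fintype ζ] [DecidableEq ζ]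

omit [DecidableEq α] in
theorem exists_ancilla_factorization (z0 : ζ) {ψ : EuclideanSpace ℂ (α × ζ)} (hψ : ‖ψ‖ = 1) :
    ∃ (u : α → EuclideanSpace ℂ ζ) (c : EuclideanSpace ℂ α),
      (∀ a, ‖u a‖ = 1) ∧ ‖c‖ = 1 ∧ ∀ p, ψ p = u p.1 p.2 * c p.1 := by
  let r a : EuclideanSpace ℂ ζ := WithLp.toLp 2 fun z => ψ (a, z)
  refine ⟨fun a => if r a = 0 then EuclideanSpace.single z0 1 else (‖r a‖⁻¹ : ℂ) • r a,
    WithLp.toLp 2 fun a => (‖r a‖ : ℂ), fun a => ?_, ?_, fun ⟨a, z⟩ => ?_⟩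
  · dsimp only
    split_ifs with h
    · simp
    · exact norm_smul_inv_norm h
  · rw [EuclideanSpace.norm_eq, ← hψ, EuclideanSpace.norm_eq, Fintype.sum_prod_type]
    congr 1
    refine sum_congr rfl fun a _ => ?_
    simp [r, EuclideanSpace.norm_eq, Real.sq_sqrt (sum_nonneg fun _ _ => sq_nonneg _)]
  · dsimp only
    split_ifs with h
    · have hz : r a z = 0 := by rw [h]; rfl
      simp_all [r]
    · have hr : (‖r a‖ : ℂ) ≠ 0 := by simpa using h
      simp only [PiLp.smul_apply, smul_eq_mul]
      field_simp
      rfl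

end Pure

theorem exists_le_of_le_sum_mul {ι : Type*} [Fintype ι] {e y : ι → ℝ} (he : ∀ k, 0 ≤ e k)
    (hsum : ∑ k, e k = 1) {x : ℝ} (hx : x ≤ ∑ k, e k * y k) : ∃ k, x ≤ y k := by
  have hne : (univ : Finset ι).Nonempty := by
    by_contra h
    simp [not_nonempty_iff_eq_empty.mp h] at hsum
  obtain ⟨k, -, hk⟩ := exists_max_image univ y hne
  refine ⟨k, hx.trans ?_⟩
  calc ∑ j, e j * y j ≤ ∑ j, e j * y k :=
        sum_le_sum fun j _ => mul_le_mul_of_nonneg_left (hk j (mem_univ j)) (he j)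
    _ = y k := by rw [← sum_mul, hsum, one_mul]

section Aux

variable {α β ζ : Type*} [Fintype α] [DecidableEq α] [Fintype β] [DecidableEq β]
  [Fintype ζ] [DecidableEq ζ]

theorem exists_aux_strategy_eq (z0 : ζ) {Φ : SO α β} (hΦ : IsChannel Φ) (hdi : IsDI Φ)
    {ρ : Matrix α α ℂ} (hρ : IsState ρ) (lam : ℝ) (φ : α → ℝ) :
    ∃ (Φ' : SO (α × ζ) β) (ρ' : Matrix (α × ζ) (α × ζ) ℂ), IsChannel Φ' ∧ IsDI Φ' ∧
      IsState ρ' ∧ Φ' (diffOp lam (fun p : α × ζ => φ p.1) ρ') = Φ (diffOp lam φ ρ) := by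
  let τ : Matrix ζ ζ ℂ := vecMulVec (EuclideanSpace.single z0 1) (star (EuclideanSpace.single z0 1))
  have hτ : IsState τ := isState_vecMulVec (by simp)
  refine ⟨Φ ∘ₗ ptr, ρ ⊗ₖ τ, hΦ.comp isChannel_ptr, hdi.comp isDI_ptr, hρ.kronecker hτ, ?_⟩
  rw [LinearMap.comp_apply, diffOp_kronecker, ptr_kronecker, hτ.2, one_smul]

theorem exists_sum_strategies_eq_of_aux (z0 : ζ) {Φ' : SO (α × ζ) β} (hΦ' : IsChannel Φ')
    (hdi' : IsDI Φ') {ρ' : Matrix (α × ζ) (α × ζ) ℂ} (hρ' : IsState ρ') (lam : ℝ) (φ : α → ℝ) :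
    ∃ (e : α × ζ → ℝ) (Φ : α × ζ → SO α β) (ρ : α × ζ → Matrix α α ℂ), (∀ k, 0 ≤ e k) ∧
      ∑ k, e k = 1 ∧ (∀ k, IsChannel (Φ k) ∧ IsDI (Φ k) ∧ IsState (ρ k)) ∧
      Φ' (diffOp lam (fun p : α × ζ => φ p.1) ρ') = ∑ k, (e k : ℂ) • Φ k (diffOp lam φ (ρ k)) := by
  obtain ⟨e, ψ, he, hsum, hψ, rfl⟩ := hρ'.exists_pure_decomposition
  choose u c hu hc hfac using fun k => exists_ancilla_factorization z0 (hψ k)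
  refine ⟨e, fun k => Φ' ∘ₗ conjCh (ancillaIsometry (u k)), fun k => vecMulVec (c k) (star (c k)),
    he, hsum, fun k => ⟨?_, hdi'.comp (isDI_conjCh_ancillaIsometry _), isState_vecMulVec (hc k)⟩, ?_⟩
  · exact hΦ'.comp (isChannel_conjCh _ (ancillaIsometry_conjTranspose_mul_self (hu k)))
  · have hpure : ∀ k, conjCh (ancillaIsometry (u k)) (vecMulVec (c k) (star (c k)))
        = vecMulVec (ψ k) (star (ψ k)) := by
      intro k
      ext p q
      simp [conjCh_ancillaIsometry_apply, vecMulVec_apply, hfac k p, hfac k q]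
      ring
    simp only [map_sum, map_smul, LinearMap.comp_apply,
      diffOp_comm (conjCh_ancillaIsometry_phaseCh _ φ), hpure]

end Aux

theorem Mpre_aux_invariant_general {α β γ ζ : Type*} [Fintype α] [DecidableEq α]
    [Fintype β] [DecidableEq β] [Fintype γ] [DecidableEq γ]
    [Fintype ζ] [DecidableEq ζ] [Nonempty ζ]
    (lam : ℝ) (φ : α → ℝ)
    (Θ : SO β γ) :
    Mpre lam (fun p : α × ζ => φ p.1) Θ = Mpre lam φ Θ := by
  obtain ⟨z0⟩ : Nonempty ζ := inferInstance
  unfold Mpre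
  congr 1
  apply csSup_eq_csSup_of_forall_exists_le
  · rintro _ ⟨Φ', ρ', hΦ', hdi', hρ', rfl⟩
    obtain ⟨e, Φ, ρ, he, hsum, hk, heq⟩ := exists_sum_strategies_eq_of_aux z0 hΦ' hdi' hρ' lam φ
    have hle : traceNorm (deph (Θ (Φ' (diffOp lam (fun p : α × ζ => φ p.1) ρ'))))
        ≤ ∑ k, e k * traceNorm (deph (Θ (Φ k (diffOp lam φ (ρ k))))) := by
      rw [heq, map_sum]
      simp only [map_smul]
      exact traceNorm_deph_sum_smul_le e he _
    obtain ⟨k, hk'⟩ := exists_le_of_le_sum_mul he hsum hle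
    exact ⟨_, ⟨Φ k, ρ k, (hk k).1, (hk k).2.1, (hk k).2.2, rfl⟩, hk'⟩
  · rintro _ ⟨Φ, ρ, hΦ, hdi, hρ, rfl⟩
    obtain ⟨Φ', ρ', hΦ', hdi', hρ', heq⟩ := exists_aux_strategy_eq z0 hΦ hdi hρ lam φ
    exact ⟨_, ⟨Φ', ρ', hΦ', hdi', hρ', rfl⟩, by rw [heq]⟩

/-- auxiliary systems do not change the pre-processed improvements:
with `φ̃(a,z) = φ(a)` (so that `Λ_{φ̃} = Λ_φ ⊗ id`), the measures agree. -/
theorem Mpre_aux_invariant {α β γ ζ : Type*} [Fintype α] [DecidableEq α] [Nonempty α]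
    [Fintype β] [DecidableEq β] [Nonempty β] [Fintype γ] [DecidableEq γ] [Nonempty γ]
    [Fintype ζ] [DecidableEq ζ] [Nonempty ζ]
    (lam : ℝ) (hlam : lam ∈ Set.Icc (0 : ℝ) 1) (φ : α → ℝ)
    (Θ : SO β γ) (hΘ : IsChannel Θ) :
    Mpre lam (fun p : α × ζ => φ p.1) Θ = Mpre lam φ Θ :=
  Mpre_aux_invariant_general lam φ Θ
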